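/- arXiv:math/0612643 — 2 statements merged into one kernel-verified Lean document; each statement's English description precedes it below -/
import Mathlib

section
/- Let (a,b,c,d) ∈ P and let f, g ∈ ℒ². Then for z ∈ {z₋, z₊}, lim_{k→∞} D(f,g)(zq^{−k}) = 0; that is, the Casorati determinant of two square-integrable functions tends to 0 at ±∞ along ℝ_q. -/
open Complex Filter

noncomputable section

namespace VVBQJ

/-- The infinite q-shifted factorial `(x;q)_∞`. -/
def poch (q x : ℂ) : ℂ := ∏' j : ℕ, (1 - x * q ^ j)

/-- The q-shifted factorial `(x;q)_n`, `n ∈ ℕ`. -/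
def pochN (q x : ℂ) (n : ℕ) : ℂ := ∏ j ∈ Finset.range n, (1 - x * q ^ j)

/-- The normalized Jacobi theta function `θ(x) = (x;q)_∞ (q/x;q)_∞`. -/
def theta (q x : ℂ) : ℂ := poch q x * poch q (q / x)

/-- The condition on the pairs `(a,b)` and `(c,d)` in the parameter set `P`. -/
def pairCond (q zm zp : ℝ) (α β : ℂ) : Prop :=
  α = (starRingEnd ℂ) β ∨
    (∃ (A B : ℝ) (k₀ : ℤ), α = (A : ℂ) ∧ β = (B : ℂ) ∧
      zp * q ^ k₀ < 1 / B ∧ 1 / B < 1 / A ∧ 1 / A < zp * q ^ (k₀ - 1)) ∨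
    (∃ (A B : ℝ) (k₀ : ℤ), α = (A : ℂ) ∧ β = (B : ℂ) ∧
      zm * q ^ (k₀ - 1) < 1 / A ∧ 1 / A < 1 / B ∧ 1 / B < zm * q ^ k₀)

/-- The parameter domain `P`. -/
def memP (q zm zp : ℝ) (a b c d : ℂ) : Prop :=
  a ≠ 0 ∧ b ≠ 0 ∧ c ≠ 0 ∧ d ≠ 0 ∧ a ≠ b ∧
    (∀ x ∈ ({a, b, c, d} : Set ℂ), ∀ k : ℤ,
      x ≠ ((zp : ℂ))⁻¹ * (q : ℂ) ^ k ∧ x ≠ ((zm : ℂ))⁻¹ * (q : ℂ) ^ k) ∧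
    pairCond q zm zp a b ∧ pairCond q zm zp c d

/-- The generic parameter domain `P_gen`. -/
def memPgen (q zm zp : ℝ) (a b c d : ℂ) : Prop :=
  memP q zm zp a b c d ∧ c ≠ d ∧
    ∀ k : ℤ, c / a ≠ (q : ℂ) ^ k ∧ c / b ≠ (q : ℂ) ^ k ∧ d / a ≠ (q : ℂ) ^ k ∧
      d / b ≠ (q : ℂ) ^ k ∧ c * d / (a * b) ≠ (q : ℂ) ^ k

/-- `s = √(cdq/(ab))`, with the principal branch of the square root. -/
def sP (q : ℝ) (a b c d : ℂ) : ℂ := (c * d * (q : ℂ) / (a * b)) ^ ((1 : ℂ) / 2)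

def Acoef (q : ℝ) (a b c d : ℂ) (x : ℝ) : ℂ :=
  (sP q a b c d)⁻¹ * (1 - (q : ℂ) / (a * (x : ℂ))) * (1 - (q : ℂ) / (b * (x : ℂ)))

def Bcoef (q : ℝ) (a b c d : ℂ) (x : ℝ) : ℂ :=
  sP q a b c d * (1 - 1 / (c * (x : ℂ))) * (1 - 1 / (d * (x : ℂ)))

def Ccoef (q : ℝ) (a b c d : ℂ) (x : ℝ) : ℂ :=
  sP q a b c d + (sP q a b c d)⁻¹ - Acoef q a b c d x - Bcoef q a b c d x

/-- The second order q-difference operator `L`. -/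
def Lop (q : ℝ) (a b c d : ℂ) (f : ℝ → ℂ) (x : ℝ) : ℂ :=
  Acoef q a b c d x * f (x / q) + Bcoef q a b c d x * f (q * x) + Ccoef q a b c d x * f x

/-- The weight function `w`. -/
def w (q : ℝ) (a b c d : ℂ) (x : ℝ) : ℂ :=
  poch q (a * (x : ℂ)) * poch q (b * (x : ℂ)) / (poch q (c * (x : ℂ)) * poch q (d * (x : ℂ)))

/-- The function `u(x) = (1-q)² B(x) x² w(x)`. -/
def u (q : ℝ) (a b c d : ℂ) (x : ℝ) : ℂ :=
  (1 - (q : ℂ)) ^ 2 * Bcoef q a b c d x * (x : ℂ) ^ 2 * w q a b c d x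

/-- The Casorati determinant `D(f,g)`. -/
def casD (q : ℝ) (a b c d : ℂ) (f g : ℝ → ℂ) (x : ℝ) : ℂ :=
  (f x * g (q * x) - f (q * x) * g x) * u q a b c d x / ((1 - (q : ℂ)) * (x : ℂ))

/-- The truncated inner product `⟨f,g⟩_{k,l;m,n}`. -/
def trunc (q zm zp : ℝ) (a b c d : ℂ) (f g : ℝ → ℂ) (k l m n : ℤ) : ℂ :=
  (1 - (q : ℂ)) *
    ((∑ j ∈ Finset.Icc n m, f (zp * q ^ j) * (starRingEnd ℂ) (g (zp * q ^ j)) *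
        w q a b c d (zp * q ^ j) * ((zp * q ^ j : ℝ) : ℂ)) -
      ∑ j ∈ Finset.Icc k l, f (zm * q ^ j) * (starRingEnd ℂ) (g (zm * q ^ j)) *
        w q a b c d (zm * q ^ j) * ((zm * q ^ j : ℝ) : ℂ))

/-- The constant `K_z`. -/
def Kz (q : ℝ) (a b c d : ℂ) (z : ℝ) : ℂ :=
  (z : ℂ) * (1 - (q : ℂ)) * (theta q (a * z) * theta q (b * z)) /
    (theta q (c * z) * theta q (d * z))

/-- Membership in the Hilbert space `ℒ²(ℝ_q, w(x) d_q x)`. -/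
def memL2 (q zm zp : ℝ) (a b c d : ℂ) (f : ℝ → ℂ) : Prop :=
  Summable (fun k : ℤ => ‖f (zp * q ^ k)‖ ^ 2 * ‖w q a b c d (zp * q ^ k)‖ * |zp * q ^ k|) ∧
    Summable (fun k : ℤ => ‖f (zm * q ^ k)‖ ^ 2 * ‖w q a b c d (zm * q ^ k)‖ * |zm * q ^ k|)

/-- The inner product on `ℒ²`. -/
def innerL2 (q zm zp : ℝ) (a b c d : ℂ) (f g : ℝ → ℂ) : ℂ :=
  (1 - (q : ℂ)) *
    ((∑' k : ℤ, f (zp * q ^ k) * (starRingEnd ℂ) (g (zp * q ^ k)) *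
        w q a b c d (zp * q ^ k) * ((zp * q ^ k : ℝ) : ℂ)) -
      ∑' k : ℤ, f (zm * q ^ k) * (starRingEnd ℂ) (g (zm * q ^ k)) *
        w q a b c d (zm * q ^ k) * ((zm * q ^ k : ℝ) : ℂ))

/-- The squared `ℒ²`-norm. -/
def normSqL2 (q zm zp : ℝ) (a b c d : ℂ) (f : ℝ → ℂ) : ℝ :=
  (1 - q) *
    ((∑' k : ℤ, ‖f (zp * q ^ k)‖ ^ 2 * ‖w q a b c d (zp * q ^ k)‖ * (zp * q ^ k)) +
      ∑' k : ℤ, ‖f (zm * q ^ k)‖ ^ 2 * ‖w q a b c d (zm * q ^ k)‖ * (-(zm * q ^ k)))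

/-- The q-difference operator `D_q`. -/
def Dq (q : ℝ) (f : ℝ → ℂ) (x : ℝ) : ℂ := (f x - f (q * x)) / ((1 - (q : ℂ)) * (x : ℂ))

/-- The q-line `ℝ_q`. -/
def Rq (q zm zp : ℝ) : Set ℝ := {x | ∃ k : ℤ, x = zm * q ^ k ∨ x = zp * q ^ k}

/-- Membership in the domain `𝒟`. -/
def memD (q zm zp : ℝ) (a b c d : ℂ) (f : ℝ → ℂ) : Prop :=
  memL2 q zm zp a b c d f ∧ memL2 q zm zp a b c d (Lop q a b c d f) ∧
    (∃ v : ℂ, Tendsto (fun k : ℕ => f (zm * q ^ k)) atTop (nhds v) ∧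
        Tendsto (fun k : ℕ => f (zp * q ^ k)) atTop (nhds v)) ∧
    (∃ v : ℂ, Tendsto (fun k : ℕ => Dq q f (zm * q ^ k)) atTop (nhds v) ∧
        Tendsto (fun k : ℕ => Dq q f (zp * q ^ k)) atTop (nhds v))

/-- Membership in the eigenspace `V_μ` (functions on `ℝ_q`). -/
def memV (q zm zp : ℝ) (a b c d : ℂ) (μ : ℂ) (f : ℝ → ℂ) : Prop :=
  (∀ x ∈ Rq q zm zp, Lop q a b c d f x = μ * f x) ∧
    (∃ v : ℂ, Tendsto (fun k : ℕ => f (zm * q ^ k)) atTop (nhds v) ∧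
        Tendsto (fun k : ℕ => f (zp * q ^ k)) atTop (nhds v)) ∧
    (∃ v : ℂ, Tendsto (fun k : ℕ => Dq q f (zm * q ^ k)) atTop (nhds v) ∧
        Tendsto (fun k : ℕ => Dq q f (zp * q ^ k)) atTop (nhds v))

/-- The set of regular spectral values `S_reg = ℂ* \ {± q^{k/2}}`. -/
def Sreg (q : ℝ) (γ : ℂ) : Prop :=
  γ ≠ 0 ∧ ∀ k : ℤ, γ ≠ ((q ^ ((k : ℝ) / 2) : ℝ) : ℂ) ∧ γ ≠ -((q ^ ((k : ℝ) / 2) : ℝ) : ℂ)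

/-- The big q-Jacobi function `φ_γ(x)`. -/
def phi (q : ℝ) (a b c d : ℂ) (γ x : ℂ) : ℂ :=
  ∑' n : ℕ,
    pochN q (q / (a * x)) n * pochN q (sP q a b c d * γ) n * pochN q (sP q a b c d / γ) n /
      (pochN q q n * pochN q (c * q / a) n * pochN q (d * q / a) n) * (b * x) ^ n

/-- The asymptotic solution `Φ_γ(z q^{-k})`, in index form. -/
def PhiIdx (q : ℝ) (a b c d : ℂ) (γ : ℂ) (z : ℝ) (k : ℤ) : ℂ :=
  let s : ℂ := sP q a b c d
  let x : ℂ := (z : ℂ) * (q : ℂ) ^ (-k)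
  (s * γ) ^ k *
    (poch q ((q : ℂ) / (b * x)) * poch q ((q : ℂ) ^ 2 * γ / (a * s * x)) /
      (poch q ((q : ℂ) / (c * x)) * poch q ((q : ℂ) / (d * x)))) *
    ∑' n : ℕ,
      pochN q ((q : ℂ) * γ / s) n * pochN q (c * q * γ / (s * a)) n *
          pochN q (d * q * γ / (s * a)) n /
        (pochN q q n * pochN q ((q : ℂ) ^ 2 * γ / (a * s * x)) n * pochN q ((q : ℂ) * γ ^ 2) n) *
        ((q : ℂ) / (b * x)) ^ n

/-- Casorati determinant at `x = z q^{-k}` for index-form functions. -/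
def casDIdx (q : ℝ) (a b c d : ℂ) (f g : ℤ → ℂ) (z : ℝ) (k : ℤ) : ℂ :=
  (f k * g (k - 1) - f (k - 1) * g k) * u q a b c d (z * q ^ (-k)) /
    ((1 - (q : ℂ)) * ((z * q ^ (-k) : ℝ) : ℂ))

/-- The c-function `c_z(γ)`. -/
def cz (q : ℝ) (a b c d : ℂ) (z : ℝ) (γ : ℂ) : ℂ :=
  let s : ℂ := sP q a b c d
  poch q (s / γ) * poch q (c * q / (a * s * γ)) * poch q (d * q / (a * s * γ)) *
      theta q (b * s * z * γ) /
    (poch q (c * q / a) * poch q (d * q / a) * poch q (1 / γ ^ 2) * theta q (b * z))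

/-- The expansion coefficient `d_z(γ)`. -/
def dz (q : ℝ) (a b c d : ℂ) (z : ℝ) (γ : ℂ) : ℂ :=
  let s : ℂ := sP q a b c d
  (poch q (c * q / a) * poch q (d * q / a) * theta q (b * z) /
      (theta q (a / b) * theta q (c * z) * theta q (d * z))) *
    (poch q (c * q * γ / (s * b)) * poch q (d * q * γ / (s * b)) *
        theta q (a * s * z / (q * γ)) /
      (poch q (q * γ ^ 2) * poch q (s / γ)))

/-- The Casorati determinant `v(γ) = D(Φ_γ^+, Φ_γ^-)`. -/
def vFun (q zm zp : ℝ) (a b c d : ℂ) (γ : ℂ) : ℂ :=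
  let s : ℂ := sP q a b c d;
  -((zp : ℂ) * (1 - (q : ℂ)) * theta q ((zm : ℂ) / zp) /
      (theta q (c * zm) * theta q (d * zm) * theta q (c * zp) * theta q (d * zp))) *
    (poch q (c * q * γ / (a * s)) * poch q (d * q * γ / (a * s)) * poch q (c * q * γ / (b * s)) *
        poch q (d * q * γ / (b * s)) * poch q (s * γ) * poch q (q * γ / s) *
        theta q (a * b * s * zm * zp / (q * γ)) /
      (γ * (poch q (q * γ ^ 2)) ^ 2))

/-- The function `v₁(γ)` in the continuous part of the spectral measure. -/
def v1Fun (q zm zp : ℝ) (a b c d : ℂ) (γ : ℂ) : ℂ :=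
  let s : ℂ := sP q a b c d
  ((poch q (c * q / a)) ^ 2 * (poch q (d * q / a)) ^ 2 * theta q (b * zp) * theta q (b * zm) /
      ((1 - (q : ℂ)) * a * b * (zm : ℂ) ^ 2 * (zp : ℂ) ^ 2 *
        (theta q ((zm : ℂ) / zp) * theta q ((zp : ℂ) / zm) * theta q (a / b) * theta q (b / a)))) *
    (poch q (γ ^ 2) * poch q (γ⁻¹ ^ 2) /
      (poch q (s * γ) * poch q (s / γ) * poch q (c * q * γ / (a * s)) *
        poch q (c * q / (a * s * γ)) * poch q (d * q * γ / (a * s)) *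
        poch q (d * q / (a * s * γ)) *
        (theta q (s * γ) * theta q (s / γ) * theta q (a * b * s * zm * zp * γ) *
          theta q (a * b * s * zm * zp / γ)))) *
    ((zm : ℂ) * (theta q (a * zp) * theta q (c * zp) * theta q (d * zp) * theta q (b * zm) *
          theta q (a * s * zm * γ) * theta q (a * s * zm / γ)) -
      (zp : ℂ) * (theta q (a * zm) * theta q (c * zm) * theta q (d * zm) * theta q (b * zp) *
          theta q (a * s * zp * γ) * theta q (a * s * zp / γ)))

/-- The function `v₂(γ)` in the continuous part of the spectral measure. -/
def v2Fun (q zm zp : ℝ) (a b c d : ℂ) (γ : ℂ) : ℂ :=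
  let s : ℂ := sP q a b c d
  (poch q (c * q / a) * poch q (d * q / a) * poch q (c * q / b) * poch q (d * q / b) *
      (theta q (a * zp) * theta q (a * zm) * theta q (b * zp) * theta q (b * zm) *
        theta q (c * d * zm * zp)) /
      (a * b * (zm : ℂ) ^ 2 * (zp : ℂ) * (1 - (q : ℂ)) *
        (theta q ((zp : ℂ) / zm) * theta q (a / b) * theta q (b / a)))) *
    (poch q (γ ^ 2) * poch q (γ⁻¹ ^ 2) /
      (poch q (s * γ) * poch q (s / γ) *
        (theta q (s * γ) * theta q (s / γ) * theta q (a * b * s * zm * zp * γ) *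
          theta q (a * b * s * zm * zp / γ))))

/-- The function `u₁(γ)`. -/
def u1Fun (q zm zp : ℝ) (a b c d : ℂ) (γ : ℂ) : ℂ :=
  Kz q a b c d zp * cz q a b c d zp γ * cz q a b c d zp γ⁻¹ -
    Kz q a b c d zm * cz q a b c d zm γ * cz q a b c d zm γ⁻¹

/-- The function `u₂(γ)`. -/
def u2Fun (q zm zp : ℝ) (a b c d : ℂ) (γ : ℂ) : ℂ :=
  Kz q a b c d zp * cz q a b c d zp γ * cz q b a c d zp γ⁻¹ -
    Kz q a b c d zm * cz q a b c d zm γ * cz q b a c d zm γ⁻¹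

/-- The big q-Jacobi polynomial `P_k(y; α, β, δ; q)`. -/
def bigqJacobiP (q : ℝ) (α β δ : ℂ) (k : ℕ) (y : ℂ) : ℂ :=
  ∑ j ∈ Finset.range (k + 1),
    pochN q (((q : ℂ) ^ k)⁻¹) j * pochN q (α * β * (q : ℂ) ^ (k + 1)) j * pochN q y j /
      (pochN q q j * pochN q (α * q) j * pochN q (δ * q) j) * (q : ℂ) ^ j

/-!
Write `D(f,g)(x) = (f(x)g(qx) - f(qx)g(x)) · (1-q) B(x) x w(x)`. The functional equation
`w(qx)(1-ax)(1-bx) = w(x)(1-cx)(1-dx)` together with `s² = cdq/(ab)` gives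
`((1-q) |B(x) x w(x)|)² = (1-q)² ∏_{α ∈ {a,b,c,d}} |1 - 1/(αx)| · |x w(x)| · |qx w(qx)|`,
and the product tends to `1` as `|x| → ∞`. So for large `|x|` the determinant is bounded by
`√ρ_f(x) √ρ_g(qx) + √ρ_f(qx) √ρ_g(x)`, where `ρ_h(y) = |h(y)|² |w(y)| |y|` is the general term of
the `ℒ²`-series of `h`; these terms tend to `0` along `z q^{-k}`.
-/

open Bornology Topology

lemma poch_eq_one_sub_mul_poch_mul {q : ℂ} (hq : ‖q‖ < 1) (y : ℂ) :
    poch q y = (1 - y) * poch q (q * y) := by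
  have hsum : Summable fun j : ℕ => ‖-(q * y * q ^ j)‖ := by
    refine ((summable_geometric_of_lt_one (norm_nonneg q) hq).mul_left ‖q * y‖).congr fun j => ?_
    simp only [norm_neg, norm_mul, norm_pow]
  have hmul : Multipliable fun j : ℕ => 1 - y * q ^ (j + 1) := by
    refine (multipliable_one_add_of_summable hsum).congr fun j => ?_
    ring
  rw [poch, poch, tprod_eq_zero_mul' (f := fun j : ℕ => 1 - y * q ^ j) hmul, pow_zero, mul_one]
  congr 2 with j
  ring

lemma sP_sq (q : ℝ) (a b c d : ℂ) : sP q a b c d ^ 2 = c * d * q / (a * b) := by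
  rw [sP, one_div]
  exact Complex.cpow_ofNat_inv_pow _ 2

lemma w_mul_shift {q : ℝ} (hq : |q| < 1) (a b c d : ℂ) {x : ℝ}
    (hcd : (1 - c * x) * (1 - d * x) ≠ 0) :
    w q a b c d (q * x) * ((1 - a * x) * (1 - b * x)) =
      w q a b c d x * ((1 - c * x) * (1 - d * x)) := by
  have hshift (α : ℂ) : poch q (α * x) = (1 - α * x) * poch q (α * ((q * x : ℝ) : ℂ)) := by
    rw [poch_eq_one_sub_mul_poch_mul (by rwa [Complex.norm_real, Real.norm_eq_abs])]
    push_cast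
    ring_nf
  rw [w, w, hshift a, hshift b, hshift c, hshift d]
  generalize poch q (a * ((q * x : ℝ) : ℂ)) = A, poch q (b * ((q * x : ℝ) : ℂ)) = B,
    poch q (c * ((q * x : ℝ) : ℂ)) = C, poch q (d * ((q * x : ℝ) : ℂ)) = D
  rw [div_mul_eq_mul_div, div_mul_eq_mul_div,
    show (1 - c * x) * C * ((1 - d * x) * D) = ((1 - c * x) * (1 - d * x)) * (C * D) by ring,
    show (1 - a * x) * A * ((1 - b * x) * B) * ((1 - c * x) * (1 - d * x)) =
      ((1 - c * x) * (1 - d * x)) * (A * B * ((1 - a * x) * (1 - b * x))) by ring,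
    mul_div_mul_left _ _ hcd]

lemma norm_sP_sq_mul {q : ℝ} (hq : 0 ≤ q) {a b : ℂ} (hab : a * b ≠ 0) (c d : ℂ) :
    ‖sP q a b c d‖ ^ 2 * ‖a * b‖ = q * ‖c * d‖ := by
  rw [← norm_pow, sP_sq, ← norm_mul, div_mul_cancel₀ _ hab, norm_mul, Complex.norm_real,
    Real.norm_of_nonneg hq, mul_comm]

lemma norm_one_sub_eq_norm_mul_norm_one_sub_one_div {y : ℂ} (hy : y ≠ 0) :
    ‖1 - y‖ = ‖y‖ * ‖1 - 1 / y‖ := by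
  rw [← norm_neg, ← norm_mul]
  congr 1
  field_simp
  ring

-- `memL2 f` says precisely that `l2Density f` is summable along `z₊ q^ℤ` and along `z₋ q^ℤ`.
def l2Density (q : ℝ) (a b c d : ℂ) (f : ℝ → ℂ) (x : ℝ) : ℝ :=
  ‖f x‖ ^ 2 * ‖w q a b c d x‖ * |x|

section CasoratiWeight

variable {q : ℝ} {a b c d : ℂ} {x : ℝ}

lemma one_sub_sq_mul_norm_Bcoef_sq_mul_le (hq : 0 ≤ q) (ha : a ≠ 0) (hb : b ≠ 0) (hc : c ≠ 0)
    (hd : d ≠ 0) (hx : x ≠ 0)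
    (hsmall : (1 - q) ^ 2 * (‖1 - 1 / (a * x)‖ * ‖1 - 1 / (b * x)‖ * ‖1 - 1 / (c * x)‖ *
      ‖1 - 1 / (d * x)‖) ≤ 1) :
    (1 - q) ^ 2 * ‖Bcoef q a b c d x‖ ^ 2 * ‖(1 - a * x) * (1 - b * x)‖ ≤
      q * ‖(1 - c * x) * (1 - d * x)‖ := by
  have hx' : (x : ℂ) ≠ 0 := by exact_mod_cast hx
  rw [Bcoef, norm_mul, norm_mul, norm_mul, norm_mul,
    norm_one_sub_eq_norm_mul_norm_one_sub_one_div (mul_ne_zero ha hx'),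
    norm_one_sub_eq_norm_mul_norm_one_sub_one_div (mul_ne_zero hb hx'),
    norm_one_sub_eq_norm_mul_norm_one_sub_one_div (mul_ne_zero hc hx'),
    norm_one_sub_eq_norm_mul_norm_one_sub_one_div (mul_ne_zero hd hx')]
  set ta := ‖1 - 1 / (a * x)‖
  set tb := ‖1 - 1 / (b * x)‖
  set tc := ‖1 - 1 / (c * x)‖
  set td := ‖1 - 1 / (d * x)‖
  have hs := norm_sP_sq_mul hq (mul_ne_zero ha hb) c d
  simp only [norm_mul] at hs ⊢
  calc (1 - q) ^ 2 * (‖sP q a b c d‖ * tc * td) ^ 2 *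
        (‖a‖ * ‖(x : ℂ)‖ * ta * (‖b‖ * ‖(x : ℂ)‖ * tb))
      = ‖sP q a b c d‖ ^ 2 * (‖a‖ * ‖b‖) * ‖(x : ℂ)‖ ^ 2 * tc * td *
          ((1 - q) ^ 2 * (ta * tb * tc * td)) := by ring
    _ ≤ ‖sP q a b c d‖ ^ 2 * (‖a‖ * ‖b‖) * ‖(x : ℂ)‖ ^ 2 * tc * td * 1 := by gcongr
    _ = q * (‖c‖ * ‖(x : ℂ)‖ * tc * (‖d‖ * ‖(x : ℂ)‖ * td)) := by rw [hs]; ring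

lemma norm_u_div_le_sqrt_mul_sqrt (hq0 : 0 < q) (hq1 : q < 1) (ha : a ≠ 0) (hb : b ≠ 0)
    (hc : c ≠ 0) (hd : d ≠ 0) (hx : x ≠ 0) (hab : (1 - a * x) * (1 - b * x) ≠ 0)
    (hcd : (1 - c * x) * (1 - d * x) ≠ 0)
    (hsmall : (1 - q) ^ 2 * (‖1 - 1 / (a * x)‖ * ‖1 - 1 / (b * x)‖ * ‖1 - 1 / (c * x)‖ *
      ‖1 - 1 / (d * x)‖) ≤ 1) :
    ‖u q a b c d x / ((1 - q) * x)‖ ≤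
      √(‖w q a b c d x‖ * |x|) * √(‖w q a b c d (q * x)‖ * |q * x|) := by
  have hx' : (x : ℂ) ≠ 0 := by exact_mod_cast hx
  have hq' : (1 : ℂ) - q ≠ 0 := by exact_mod_cast (sub_pos.2 hq1).ne'
  have hu : u q a b c d x / ((1 - q) * x) = (1 - q) * Bcoef q a b c d x * x * w q a b c d x := by
    rw [u]; field_simp
  have hshift : ‖w q a b c d (q * x)‖ * ‖(1 - a * x) * (1 - b * x)‖ =
      ‖w q a b c d x‖ * ‖(1 - c * x) * (1 - d * x)‖ := by
    rw [← norm_mul, ← norm_mul, w_mul_shift (by rwa [abs_of_pos hq0]) a b c d hcd]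
  have hB := one_sub_sq_mul_norm_Bcoef_sq_mul_le hq0.le ha hb hc hd hx hsmall
  have hpos : 0 < ‖(1 - a * x) * (1 - b * x)‖ := norm_pos_iff.2 hab
  have hnq : ‖(1 : ℂ) - q‖ = 1 - q := by
    rw [← Complex.ofReal_one, ← Complex.ofReal_sub, Complex.norm_real,
      Real.norm_of_nonneg (sub_pos.2 hq1).le]
  rw [hu, ← Real.sqrt_mul (by positivity), Real.le_sqrt (by positivity) (by positivity)]
  simp only [norm_mul, hnq, Complex.norm_real, Real.norm_eq_abs, abs_mul, abs_of_pos hq0]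
  refine le_of_mul_le_mul_right ?_ hpos
  calc ((1 - q) * ‖Bcoef q a b c d x‖ * |x| * ‖w q a b c d x‖) ^ 2 *
        ‖(1 - a * x) * (1 - b * x)‖
      = (1 - q) ^ 2 * ‖Bcoef q a b c d x‖ ^ 2 * ‖(1 - a * x) * (1 - b * x)‖ *
          (|x| ^ 2 * ‖w q a b c d x‖ ^ 2) := by ring
    _ ≤ q * ‖(1 - c * x) * (1 - d * x)‖ * (|x| ^ 2 * ‖w q a b c d x‖ ^ 2) := by gcongr
    _ = ‖w q a b c d x‖ * |x| * (‖w q a b c d (q * x)‖ * (q * |x|)) *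
          ‖(1 - a * x) * (1 - b * x)‖ := by
        linear_combination (-(q * |x| ^ 2 * ‖w q a b c d x‖)) * hshift

lemma eventually_norm_u_div_le_sqrt_mul_sqrt (hq0 : 0 < q) (hq1 : q < 1) (ha : a ≠ 0)
    (hb : b ≠ 0) (hc : c ≠ 0) (hd : d ≠ 0) :
    ∀ᶠ x in cobounded ℝ, ‖u q a b c d x / ((1 - q) * x)‖ ≤
      √(‖w q a b c d x‖ * |x|) * √(‖w q a b c d (q * x)‖ * |q * x|) := by
  have hinv : Tendsto (fun x : ℝ => ((x : ℂ))⁻¹) (cobounded ℝ) (𝓝 0) := by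
    simpa [Function.comp_def] using
      (Complex.continuous_ofReal.tendsto 0).comp (tendsto_inv₀_cobounded (α := ℝ))
  have hone {α : ℂ} : Tendsto (fun x : ℝ => 1 - 1 / (α * x)) (cobounded ℝ) (𝓝 1) := by
    simpa [mul_comm] using tendsto_const_nhds.sub (hinv.const_mul α⁻¹)
  have hfactor {α : ℂ} (hα : α ≠ 0) : ∀ᶠ x : ℝ in cobounded ℝ, 1 - α * x ≠ 0 := by
    filter_upwards [hone.eventually_ne one_ne_zero, eventually_ne_cobounded 0] with x h1 hx0
    rw [← norm_ne_zero_iff, norm_one_sub_eq_norm_mul_norm_one_sub_one_div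
      (mul_ne_zero hα (by exact_mod_cast hx0))]
    exact mul_ne_zero (norm_ne_zero_iff.2 (mul_ne_zero hα (by exact_mod_cast hx0)))
      (norm_ne_zero_iff.2 h1)
  have hsmall : ∀ᶠ x : ℝ in cobounded ℝ, (1 - q) ^ 2 * (‖1 - 1 / (a * x)‖ *
      ‖1 - 1 / (b * x)‖ * ‖1 - 1 / (c * x)‖ * ‖1 - 1 / (d * x)‖) < 1 := by
    have hlim := ((((hone (α := a)).norm.mul (hone (α := b)).norm).mul
      (hone (α := c)).norm).mul (hone (α := d)).norm).const_mul ((1 - q) ^ 2)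
    refine hlim.eventually_lt_const ?_
    simp only [norm_one, mul_one]
    nlinarith
  filter_upwards [hsmall, eventually_ne_cobounded 0, hfactor ha, hfactor hb, hfactor hc,
    hfactor hd] with x hx hx0 hxa hxb hxc hxd
  exact norm_u_div_le_sqrt_mul_sqrt hq0 hq1 ha hb hc hd hx0 (mul_ne_zero hxa hxb)
    (mul_ne_zero hxc hxd) hx.le

lemma sqrt_l2Density (f : ℝ → ℂ) (x : ℝ) :
    √(l2Density q a b c d f x) = ‖f x‖ * √(‖w q a b c d x‖ * |x|) := by
  rw [l2Density, mul_assoc, Real.sqrt_mul (sq_nonneg _), Real.sqrt_sq (norm_nonneg _)]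

lemma norm_casD_le (f g : ℝ → ℂ)
    (hx : ‖u q a b c d x / ((1 - q) * x)‖ ≤
      √(‖w q a b c d x‖ * |x|) * √(‖w q a b c d (q * x)‖ * |q * x|)) :
    ‖casD q a b c d f g x‖ ≤
      √(l2Density q a b c d f x) * √(l2Density q a b c d g (q * x)) +
        √(l2Density q a b c d f (q * x)) * √(l2Density q a b c d g x) := by
  rw [casD, mul_div_assoc, norm_mul, sqrt_l2Density, sqrt_l2Density, sqrt_l2Density,
    sqrt_l2Density]
  calc ‖f x * g (q * x) - f (q * x) * g x‖ * ‖u q a b c d x / ((1 - q) * x)‖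
      ≤ (‖f x‖ * ‖g (q * x)‖ + ‖f (q * x)‖ * ‖g x‖) *
          (√(‖w q a b c d x‖ * |x|) * √(‖w q a b c d (q * x)‖ * |q * x|)) := by
        gcongr
        exact (norm_sub_le _ _).trans_eq (by rw [norm_mul, norm_mul])
    _ = _ := by ring

end CasoratiWeight

lemma tendsto_comp_neg_add_of_summable {φ : ℤ → ℝ} (hφ : Summable φ) (n : ℤ) :
    Tendsto (fun k : ℕ => φ (-k + n)) atTop (𝓝 0) := by
  refine hφ.tendsto_cofinite_zero.comp ?_
  rw [← Nat.cofinite_eq_atTop]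
  exact Function.Injective.tendsto_cofinite fun i j h => by simpa using h

lemma tendsto_mul_zpow_neg_cobounded {q z : ℝ} (hq0 : 0 < q) (hq1 : q < 1) (hz : z ≠ 0) :
    Tendsto (fun k : ℕ => z * q ^ (-(k : ℤ))) atTop (cobounded ℝ) := by
  rw [← tendsto_norm_atTop_iff_cobounded]
  refine ((tendsto_pow_atTop_atTop_of_one_lt ((one_lt_inv₀ hq0).2 hq1)).const_mul_atTop
    (abs_pos.2 hz)).congr fun k => ?_
  rw [Real.norm_eq_abs, abs_mul, zpow_neg, zpow_natCast, abs_inv, abs_pow, abs_of_pos hq0, inv_pow]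

/-- the Casorati determinant of two `ℒ²`-functions vanishes at `±∞`. -/
theorem statement2 (q zm zp : ℝ) (a b c d : ℂ)
    (hq0 : 0 < q) (hq1 : q < 1) (hzm : zm < 0) (hzp : 0 < zp)
    (hP : memP q zm zp a b c d)
    (f g : ℝ → ℂ) (hf : memL2 q zm zp a b c d f) (hg : memL2 q zm zp a b c d g)
    (z : ℝ) (hz : z = zm ∨ z = zp) :
    Tendsto (fun k : ℕ => casD q a b c d f g (z * q ^ (-(k : ℤ)))) atTop (nhds 0) := by
  obtain ⟨ha, hb, hc, hd, -⟩ := hP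
  have hz0 : z ≠ 0 := by rcases hz with rfl | rfl <;> [exact hzm.ne; exact hzp.ne']
  have hdecay (h : ℝ → ℂ) (hh : memL2 q zm zp a b c d h) (n : ℤ) :
      Tendsto (fun k : ℕ => √(l2Density q a b c d h (z * q ^ (-(k : ℤ) + n)))) atTop (𝓝 0) := by
    have hsum : Summable fun j : ℤ => l2Density q a b c d h (z * q ^ j) := by
      rcases hz with rfl | rfl
      exacts [hh.2, hh.1]
    simpa using (tendsto_comp_neg_add_of_summable hsum n).sqrt
  have hqx (k : ℕ) : q * (z * q ^ (-(k : ℤ))) = z * q ^ (-(k : ℤ) + 1) := by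
    rw [zpow_add_one₀ hq0.ne']; ring
  have hbound := (tendsto_mul_zpow_neg_cobounded hq0 hq1 hz0).eventually
    (eventually_norm_u_div_le_sqrt_mul_sqrt hq0 hq1 ha hb hc hd)
  rw [tendsto_zero_iff_norm_tendsto_zero]
  refine squeeze_zero' (.of_forall fun k => norm_nonneg _)
    (hbound.mono fun k hk => norm_casD_le f g hk) ?_
  have hlim := ((hdecay f hf 0).mul (hdecay g hg 1)).add ((hdecay f hf 1).mul (hdecay g hg 0))
  rw [mul_zero, add_zero] at hlim
  simpa only [hqx, add_zero] using hlim
end VVBQJ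
end
end

section
/- Let (a,b,c,d) ∈ P_gen and let k ∈ ℤ be such that γ := z₋z₊q^k·√(abcd/q) satisfies −1 < γ < 0, and assume γ ∈ S_reg and γ ∉ {sq^j : j ∈ ℤ, j ≥ 0}. Then d_{z₊}(γ) = b(γ)·d_{z₋}(γ) and d_{z₊}†(γ) = b(γ)·d_{z₋}†(γ), where b(γ) = (z₊/z₋)^{k+1}·θ(cz₋, dz₋)/θ(cz₊, dz₊). -/
open Complex Filter

noncomputable section

namespace VVBQJ

set_option maxHeartbeats 1000000

section AuxLemmas
variable {q : ℝ}

lemma summable_log (hq0 : 0 < q) (hq1 : q < 1) (x : ℂ) :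
    Summable (fun j : ℕ => Complex.log (1 - x * (q : ℂ) ^ j)) := by
  apply Summable.of_norm_bounded_eventually_nat (g := fun j => 3/2 * (‖x‖ * q ^ j))
  · exact (summable_geometric_of_lt_one hq0.le hq1).mul_left _ |>.mul_left _
  · have ht : Tendsto (fun j : ℕ => ‖x‖ * q ^ j) atTop (nhds 0) := by
      simpa using (tendsto_pow_atTop_nhds_zero_of_lt_one (by linarith [hq0] : (0:ℝ) ≤ q) hq1).const_mul ‖x‖
    filter_upwards [ht.eventually_le_const (by norm_num : (0:ℝ) < 1/2) |>.mono (fun _ h => h)] with j hj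
    have hn : ‖-(x * (q:ℂ)^j)‖ = ‖x‖ * q ^ j := by
      rw [norm_neg, norm_mul, norm_pow, Complex.norm_real, Real.norm_eq_abs,
        abs_of_pos hq0]
    have := Complex.norm_log_one_add_half_le_self (z := -(x * (q:ℂ)^j)) (by rw [hn]; exact hj)
    rw [hn] at this
    simpa [sub_eq_add_neg] using this

lemma poch_eq_exp (hq0 : 0 < q) (hq1 : q < 1) (x : ℂ)
    (hx : ∀ j : ℕ, 1 - x * (q : ℂ) ^ j ≠ 0) :
    poch (q : ℂ) x = Complex.exp (∑' j : ℕ, Complex.log (1 - x * (q : ℂ) ^ j)) := by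
  have h := (summable_log hq0 hq1 x).hasSum.cexp
  have he : (cexp ∘ fun j : ℕ => Complex.log (1 - x * (q : ℂ) ^ j)) =
      fun j : ℕ => 1 - x * (q : ℂ) ^ j :=
    funext fun j => Complex.exp_log (hx j)
  rw [he] at h
  exact h.tprod_eq

lemma poch_ne_zero (hq0 : 0 < q) (hq1 : q < 1) (x : ℂ)
    (hx : ∀ j : ℕ, 1 - x * (q : ℂ) ^ j ≠ 0) : poch (q : ℂ) x ≠ 0 := by
  rw [poch_eq_exp hq0 hq1 x hx]; exact Complex.exp_ne_zero _

lemma poch_multipliable (hq0 : 0 < q) (hq1 : q < 1) (x : ℂ)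
    (hx : ∀ j : ℕ, 1 - x * (q : ℂ) ^ j ≠ 0) :
    Multipliable (fun j : ℕ => 1 - x * (q : ℂ) ^ j) := by
  have h := (summable_log hq0 hq1 x).hasSum.cexp
  have he : (cexp ∘ fun j : ℕ => Complex.log (1 - x * (q : ℂ) ^ j)) =
      fun j : ℕ => 1 - x * (q : ℂ) ^ j :=
    funext fun j => Complex.exp_log (hx j)
  rw [he] at h
  exact ⟨_, h⟩

lemma poch_shift (hq0 : 0 < q) (hq1 : q < 1) (x : ℂ)
    (hx : ∀ j : ℕ, 1 - x * (q : ℂ) ^ j ≠ 0) :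
    poch (q : ℂ) x = (1 - x) * poch (q : ℂ) ((q : ℂ) * x) := by
  have hx' : ∀ j : ℕ, 1 - ((q : ℂ) * x) * (q : ℂ) ^ j ≠ 0 := by
    intro j
    have := hx (j + 1)
    rw [pow_succ] at this
    convert this using 2
    ring
  have hm : Multipliable (fun n : ℕ => 1 - x * (q : ℂ) ^ (n + 1)) := by
    have := poch_multipliable hq0 hq1 ((q : ℂ) * x) hx'
    apply this.congr
    intro n
    rw [pow_succ]
    ring
  have h := tprod_eq_zero_mul' (f := fun j : ℕ => 1 - x * (q : ℂ) ^ j) hm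
  unfold poch
  rw [h]
  congr 1
  · simp
  · exact tprod_congr fun n => by simp only [pow_succ]; ring

lemma qC_ne (hq0 : 0 < q) : (q : ℂ) ≠ 0 := Complex.ofReal_ne_zero.mpr hq0.ne'

lemma fact_ne (hq0 : 0 < q) (x : ℂ) (hx : ∀ j : ℤ, x ≠ (q : ℂ) ^ j) :
    ∀ j : ℕ, 1 - x * (q : ℂ) ^ j ≠ 0 := by
  intro j h
  have hqj : ((q : ℂ)) ^ (j : ℕ) ≠ 0 := pow_ne_zero _ (qC_ne hq0)
  have h1 : x * (q : ℂ) ^ (j : ℕ) = 1 := by linear_combination -h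
  apply hx (-(j : ℤ))
  rw [zpow_neg, zpow_natCast]
  exact eq_inv_of_mul_eq_one_left h1

lemma Pnot_inv (hq0 : 0 < q) (x : ℂ) (hx : ∀ j : ℤ, x ≠ (q : ℂ) ^ j) :
    ∀ j : ℤ, x⁻¹ ≠ (q : ℂ) ^ j := by
  intro j h
  have hx0 : x ≠ 0 := by
    intro h0
    rw [h0, inv_zero] at h
    exact (zpow_ne_zero j (qC_ne hq0)) h.symm
  apply hx (-j)
  rw [← inv_inv x, h, ← zpow_neg]

lemma Pnot_zpow_mul (hq0 : 0 < q) (x : ℂ) (hx : ∀ j : ℤ, x ≠ (q : ℂ) ^ j) (m : ℤ) :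
    ∀ j : ℤ, (q : ℂ) ^ m * x ≠ (q : ℂ) ^ j := by
  intro j h
  apply hx (j - m)
  have hqm : ((q : ℂ)) ^ m ≠ 0 := zpow_ne_zero m (qC_ne hq0)
  rw [zpow_sub₀ (qC_ne hq0)]
  field_simp
  linear_combination h

lemma Pnot_q_div (hq0 : 0 < q) (x : ℂ) (hx : ∀ j : ℤ, x ≠ (q : ℂ) ^ j) :
    ∀ j : ℤ, (q : ℂ) / x ≠ (q : ℂ) ^ j := by
  intro j
  have := Pnot_zpow_mul hq0 x⁻¹ (Pnot_inv hq0 x hx) 1 j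
  rwa [zpow_one, ← div_eq_mul_inv] at this

lemma theta_ne_zero (hq0 : 0 < q) (hq1 : q < 1) (x : ℂ)
    (hx : ∀ j : ℤ, x ≠ (q : ℂ) ^ j) : theta (q : ℂ) x ≠ 0 :=
  mul_ne_zero (poch_ne_zero hq0 hq1 x (fact_ne hq0 x hx))
    (poch_ne_zero hq0 hq1 _ (fact_ne hq0 _ (Pnot_q_div hq0 x hx)))

lemma theta_q_mul (hq0 : 0 < q) (hq1 : q < 1) (x : ℂ) (hx0 : x ≠ 0)
    (hx : ∀ j : ℤ, x ≠ (q : ℂ) ^ j) :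
    theta (q : ℂ) ((q : ℂ) * x) = -x⁻¹ * theta (q : ℂ) x := by
  have hq := qC_ne hq0
  have h1 : (q : ℂ) / ((q : ℂ) * x) = x⁻¹ := by field_simp
  have h2 : (q : ℂ) * x⁻¹ = (q : ℂ) / x := by rw [div_eq_mul_inv]
  unfold theta
  rw [h1, poch_shift hq0 hq1 x⁻¹ (fact_ne hq0 x⁻¹ (Pnot_inv hq0 x hx)), h2,
    poch_shift hq0 hq1 x (fact_ne hq0 x hx)]
  have hc := mul_inv_cancel₀ hx0
  linear_combination (-(poch (q:ℂ) ((q:ℂ)*x) * poch (q:ℂ) ((q:ℂ)/x))) * hc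

lemma theta_inv (hq0 : 0 < q) (hq1 : q < 1) (x : ℂ) (hx0 : x ≠ 0)
    (hx : ∀ j : ℤ, x ≠ (q : ℂ) ^ j) :
    theta (q : ℂ) x⁻¹ = -x⁻¹ * theta (q : ℂ) x := by
  have hq := qC_ne hq0
  have h1 : (q : ℂ) / x⁻¹ = (q : ℂ) * x := by field_simp
  have h2 : (q : ℂ) * x⁻¹ = (q : ℂ) / x := by rw [div_eq_mul_inv]
  unfold theta
  rw [h1, poch_shift hq0 hq1 x⁻¹ (fact_ne hq0 x⁻¹ (Pnot_inv hq0 x hx)), h2,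
    poch_shift hq0 hq1 x (fact_ne hq0 x hx)]
  have hc := mul_inv_cancel₀ hx0
  linear_combination (-(poch (q:ℂ) ((q:ℂ)*x) * poch (q:ℂ) ((q:ℂ)/x))) * hc

lemma theta_div_q (hq0 : 0 < q) (hq1 : q < 1) (v : ℂ) (hv0 : v ≠ 0)
    (hv : ∀ j : ℤ, v ≠ (q : ℂ) ^ j) :
    theta (q : ℂ) ((q : ℂ)⁻¹ * v) = -((q : ℂ)⁻¹ * v) * theta (q : ℂ) v := by
  have hq := qC_ne hq0
  have hv0' : (q : ℂ)⁻¹ * v ≠ 0 := mul_ne_zero (inv_ne_zero hq) hv0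
  have hv' : ∀ j : ℤ, (q : ℂ)⁻¹ * v ≠ (q : ℂ) ^ j := by
    intro j
    have := Pnot_zpow_mul hq0 v hv (-1) j
    rwa [zpow_neg_one] at this
  have h := theta_q_mul hq0 hq1 ((q : ℂ)⁻¹ * v) hv0' hv'
  rw [show (q : ℂ) * ((q : ℂ)⁻¹ * v) = v by field_simp] at h
  rw [h]
  have hc := mul_inv_cancel₀ hv0'
  linear_combination (-(theta (q:ℂ) ((q:ℂ)⁻¹ * v))) * hc

lemma key_theta (hq0 : 0 < q) (hq1 : q < 1) (x y : ℂ) (hx0 : x ≠ 0) (hy0 : y ≠ 0)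
    (hx : ∀ j : ℤ, x ≠ (q : ℂ) ^ j) (hy : ∀ j : ℤ, y ≠ (q : ℂ) ^ j) (k : ℤ) :
    theta (q : ℂ) x * theta (q : ℂ) ((q : ℂ) ^ (-k) * y⁻¹) =
      (x / y) ^ (k + 1) * (theta (q : ℂ) y * theta (q : ℂ) ((q : ℂ) ^ (-k) * x⁻¹)) := by
  have hq := qC_ne hq0
  have hxy : x / y ≠ 0 := div_ne_zero hx0 hy0
  have hargne : ∀ (z : ℂ), z ≠ 0 → ∀ m : ℤ, (q : ℂ) ^ m * z⁻¹ ≠ 0 := fun z hz m =>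
    mul_ne_zero (zpow_ne_zero m hq) (inv_ne_zero hz)
  have hargP : ∀ (z : ℂ), (∀ j : ℤ, z ≠ (q : ℂ) ^ j) → ∀ m : ℤ,
      ∀ j : ℤ, (q : ℂ) ^ m * z⁻¹ ≠ (q : ℂ) ^ j := fun z hz m =>
    Pnot_zpow_mul hq0 z⁻¹ (Pnot_inv hq0 z hz) m
  induction k using Int.induction_on with
  | zero =>
    simp only [neg_zero, zpow_zero, one_mul, zero_add, zpow_one]
    rw [theta_inv hq0 hq1 x hx0 hx, theta_inv hq0 hq1 y hy0 hy]
    have hcx := mul_inv_cancel₀ hx0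
    linear_combination (theta (q:ℂ) x * theta (q:ℂ) y * y⁻¹) * hcx
  | succ n ih =>
    have e : ∀ z : ℂ, (q : ℂ) ^ (-((n : ℤ) + 1)) * z⁻¹ =
        (q : ℂ)⁻¹ * ((q : ℂ) ^ (-(n : ℤ)) * z⁻¹) := by
      intro z
      have h : (q : ℂ) ^ (-((n : ℤ) + 1)) = (q : ℂ)⁻¹ * (q : ℂ) ^ (-(n : ℤ)) := by
        rw [zpow_neg, zpow_neg, zpow_add_one₀ hq, mul_inv]
        ring
      rw [h, mul_assoc]
    rw [e x, e y,
      theta_div_q hq0 hq1 _ (hargne y hy0 _) (hargP y hy _),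
      theta_div_q hq0 hq1 _ (hargne x hx0 _) (hargP x hx _),
      zpow_add_one₀ hxy]
    set A := (q : ℂ) ^ (-(n : ℤ)) * y⁻¹ with hA
    set B := (q : ℂ) ^ (-(n : ℤ)) * x⁻¹ with hB
    set P := (x / y) ^ ((n : ℤ) + 1) with hP
    have hcx := mul_inv_cancel₀ hx0
    have hrel : A = (x / y) * B * (x * x⁻¹) := by rw [hA, hB]; field_simp
    linear_combination (-((q:ℂ)⁻¹ * A)) * ih +
      ((q:ℂ)⁻¹ * P * theta (q:ℂ) y * theta (q:ℂ) B * ((q:ℂ) ^ (-(n : ℤ)) * y⁻¹)) * hcx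
  | pred n ih =>
    rw [show (-(-(n : ℤ) - 1)) = (n : ℤ) + 1 from by ring]
    rw [show (-(n : ℤ) - 1 + 1) = -(n : ℤ) from by ring]
    rw [show (-(-(n : ℤ))) = (n : ℤ) from by ring] at ih
    rw [zpow_add_one₀ hxy] at ih
    have e : ∀ z : ℂ, (q : ℂ) ^ ((n : ℤ) + 1) * z⁻¹ =
        (q : ℂ) * ((q : ℂ) ^ (n : ℤ) * z⁻¹) := by
      intro z
      have h : (q : ℂ) ^ ((n : ℤ) + 1) = (q : ℂ) * (q : ℂ) ^ ((n : ℤ)) := by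
        rw [zpow_add_one₀ hq]
        ring
      rw [h, mul_assoc]
    rw [e x, e y,
      theta_q_mul hq0 hq1 _ (hargne y hy0 _) (hargP y hy _),
      theta_q_mul hq0 hq1 _ (hargne x hx0 _) (hargP x hx _)]
    have hiy : ((q : ℂ) ^ (n : ℤ) * y⁻¹)⁻¹ = (q : ℂ) ^ (-(n : ℤ)) * y := by
      rw [mul_inv, inv_inv, ← zpow_neg]
    have hix : ((q : ℂ) ^ (n : ℤ) * x⁻¹)⁻¹ = (q : ℂ) ^ (-(n : ℤ)) * x := by
      rw [mul_inv, inv_inv, ← zpow_neg]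
    rw [hiy, hix]
    set A := (q : ℂ) ^ ((n : ℤ)) * y⁻¹ with hA
    set B := (q : ℂ) ^ ((n : ℤ)) * x⁻¹ with hB
    set P := (x / y) ^ (-(n : ℤ)) with hP
    have hcy := mul_inv_cancel₀ hy0
    linear_combination (-((q:ℂ) ^ (-(n : ℤ)) * y)) * ih +
      (-((q:ℂ) ^ (-(n : ℤ)) * P * theta (q:ℂ) y * theta (q:ℂ) B * x)) * hcy

lemma pair_pos {zm zp : ℝ} (hzm : zm < 0) (hzp : 0 < zp) (hq0 : 0 < q) {α β : ℂ}
    (hβ : β ≠ 0) (h : pairCond q zm zp α β) : ∃ t : ℝ, 0 < t ∧ α * β = (t : ℂ) := by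
  rcases h with h | ⟨A, B, k₀, ha, hb, h1, h2, h3⟩ | ⟨A, B, k₀, ha, hb, h1, h2, h3⟩
  · exact ⟨Complex.normSq β, Complex.normSq_pos.mpr hβ,
      by rw [h, mul_comm, Complex.mul_conj]⟩
  · have hB : 0 < B := one_div_pos.mp (lt_trans (by positivity) h1)
    have hA : 0 < A := one_div_pos.mp
      (lt_trans (lt_trans (by positivity) h1) h2)
    exact ⟨A * B, mul_pos hA hB, by rw [ha, hb]; push_cast; ring⟩
  · have h0 : zm * q ^ k₀ < 0 := mul_neg_of_neg_of_pos hzm (by positivity)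
    have hB : B < 0 := one_div_neg.mp (lt_trans h3 h0)
    have hA : A < 0 := one_div_neg.mp (lt_trans h2 (lt_trans h3 h0))
    exact ⟨A * B, mul_pos_of_neg_of_neg hA hB, by rw [ha, hb]; push_cast; ring⟩

lemma s_rel (hq0 : 0 < q) {a b c d : ℂ} {A C : ℝ} (hA : 0 < A) (hC : 0 < C)
    (habA : a * b = (A : ℂ)) (hcdC : c * d = (C : ℂ)) :
    sP q a b c d ≠ 0 ∧
      sP q a b c d * (a * b) = (q : ℂ) * (a * b * c * d / (q : ℂ)) ^ ((1 : ℂ) / 2) := by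
  have h1 : c * d * (q : ℂ) / (a * b) = ((C * q / A : ℝ) : ℂ) := by
    rw [habA, hcdC]; push_cast; ring
  have h2 : a * b * c * d / (q : ℂ) = ((A * C / q : ℝ) : ℂ) := by
    rw [show a * b * c * d = (a * b) * (c * d) by ring, habA, hcdC]; push_cast; ring
  have hpos1 : (0:ℝ) ≤ C * q / A := by positivity
  have hpos2 : (0:ℝ) ≤ A * C / q := by positivity
  have hhalf : ((1 : ℂ) / 2) = (((1:ℝ)/2 : ℝ) : ℂ) := by norm_num
  have e1 : sP q a b c d = (((C * q / A) ^ ((1:ℝ)/2) : ℝ) : ℂ) := by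
    unfold sP
    rw [h1, hhalf, ← Complex.ofReal_cpow hpos1]
  have e2 : (a * b * c * d / (q : ℂ)) ^ ((1 : ℂ) / 2) =
      (((A * C / q) ^ ((1:ℝ)/2) : ℝ) : ℂ) := by
    rw [h2, hhalf, ← Complex.ofReal_cpow hpos2]
  constructor
  · rw [e1]
    exact Complex.ofReal_ne_zero.mpr (Real.rpow_pos_of_pos (by positivity) _).ne'
  · rw [e1, e2, habA]
    rw [← Complex.ofReal_mul, ← Complex.ofReal_mul]
    congr 1
    rw [← Real.sqrt_eq_rpow, ← Real.sqrt_eq_rpow]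
    have hr : C * q / A * A ^ 2 = q ^ 2 * (A * C / q) := by
      field_simp
    calc Real.sqrt (C * q / A) * A
        = Real.sqrt (C * q / A) * Real.sqrt (A ^ 2) := by rw [Real.sqrt_sq hA.le]
      _ = Real.sqrt (C * q / A * A ^ 2) := (Real.sqrt_mul hpos1 _).symm
      _ = Real.sqrt (q ^ 2 * (A * C / q)) := by rw [hr]
      _ = Real.sqrt (q ^ 2) * Real.sqrt (A * C / q) := Real.sqrt_mul (sq_nonneg q) _
      _ = q * Real.sqrt (A * C / q) := by rw [Real.sqrt_sq hq0.le]

lemma alg {P Tab Tczp Tdzp Tczm Tdzm Tbzp Tbzm Q R θ1 θ2 r : ℂ}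
    (h1 : Tczm ≠ 0) (h2 : Tdzm ≠ 0) (key : Tbzp * θ1 = r * (Tbzm * θ2)) :
    P * Tbzp / (Tab * Tczp * Tdzp) * (Q * θ1 / R) =
      r * (Tczm * Tdzm / (Tczp * Tdzp)) * (P * Tbzm / (Tab * Tczm * Tdzm) * (Q * θ2 / R)) := by
  simp only [div_eq_mul_inv, mul_inv]
  linear_combination (P*Q*Tab⁻¹*Tczp⁻¹*Tdzp⁻¹*R⁻¹) * key
    - (P*Q*Tab⁻¹*Tczp⁻¹*Tdzp⁻¹*R⁻¹*r*Tbzm*θ2*(Tdzm*Tdzm⁻¹)) * (mul_inv_cancel₀ h1)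
    - (P*Q*Tab⁻¹*Tczp⁻¹*Tdzp⁻¹*R⁻¹*r*Tbzm*θ2) * (mul_inv_cancel₀ h2)

end AuxLemmas

/-- proportionality `d_{z₊}(γ) = b(γ) d_{z₋}(γ)` (and the dagger version)
at the point-spectrum points `γ = z₋z₊ q^k √(abcd/q)` in `(-1, 0)`. -/
theorem statement15 (q zm zp : ℝ) (a b c d : ℂ)
    (hq0 : 0 < q) (hq1 : q < 1) (hzm : zm < 0) (hzp : 0 < zp)
    (hPg : memPgen q zm zp a b c d) (k : ℤ) (γ : ℂ)
    (hγdef : γ = ((zm * zp : ℝ) : ℂ) * (q : ℂ) ^ k * (a * b * c * d / (q : ℂ)) ^ ((1 : ℂ) / 2))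
    (hreal : ∃ t : ℝ, γ = (t : ℂ) ∧ -1 < t ∧ t < 0)
    (hsreg : Sreg q γ) (hpol : ∀ j : ℕ, γ ≠ sP q a b c d * (q : ℂ) ^ j) :
    dz q a b c d zp γ =
      ((zp / zm : ℝ) : ℂ) ^ (k + 1) *
          (theta q (c * zm) * theta q (d * zm) / (theta q (c * zp) * theta q (d * zp))) *
        dz q a b c d zm γ ∧
    dz q b a c d zp γ =
      ((zp / zm : ℝ) : ℂ) ^ (k + 1) *
          (theta q (c * zm) * theta q (d * zm) / (theta q (c * zp) * theta q (d * zp))) *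
        dz q b a c d zm γ := by
  obtain ⟨⟨ha0, hb0, hc0, hd0, habne, hnot, hpab, hpcd⟩, hcdne, hgen⟩ := hPg
  have hqC : (q : ℂ) ≠ 0 := qC_ne hq0
  have hzpC : (zp : ℂ) ≠ 0 := Complex.ofReal_ne_zero.mpr hzp.ne'
  have hzmC : (zm : ℂ) ≠ 0 := Complex.ofReal_ne_zero.mpr hzm.ne
  -- `x z ∉ q^ℤ` facts
  have hkey1 : ∀ x : ℂ, ∀ z : ℂ, z ≠ 0 → (∀ j : ℤ, x ≠ z⁻¹ * (q : ℂ) ^ j) →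
      ∀ j : ℤ, x * z ≠ (q : ℂ) ^ j := by
    intro x z hz hxz j h
    apply hxz j
    rw [← h]
    field_simp
  have hPb_p : ∀ j : ℤ, b * (zp : ℂ) ≠ (q : ℂ) ^ j :=
    hkey1 b _ hzpC (fun j => (hnot b (by simp) j).1)
  have hPb_m : ∀ j : ℤ, b * (zm : ℂ) ≠ (q : ℂ) ^ j :=
    hkey1 b _ hzmC (fun j => (hnot b (by simp) j).2)
  have hPa_p : ∀ j : ℤ, a * (zp : ℂ) ≠ (q : ℂ) ^ j :=
    hkey1 a _ hzpC (fun j => (hnot a (by simp) j).1)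
  have hPa_m : ∀ j : ℤ, a * (zm : ℂ) ≠ (q : ℂ) ^ j :=
    hkey1 a _ hzmC (fun j => (hnot a (by simp) j).2)
  have hPc_m : ∀ j : ℤ, c * (zm : ℂ) ≠ (q : ℂ) ^ j :=
    hkey1 c _ hzmC (fun j => (hnot c (by simp) j).2)
  have hPd_m : ∀ j : ℤ, d * (zm : ℂ) ≠ (q : ℂ) ^ j :=
    hkey1 d _ hzmC (fun j => (hnot d (by simp) j).2)
  -- positivity of ab, cd and the square-root relation
  obtain ⟨A, hA, habA⟩ := pair_pos hzm hzp hq0 hb0 hpab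
  obtain ⟨C, hC, hcdC⟩ := pair_pos hzm hzp hq0 hd0 hpcd
  obtain ⟨hs0, hsw⟩ := s_rel hq0 hA hC habA hcdC
  have hqk : ((q : ℂ)) ^ k ≠ 0 := zpow_ne_zero k hqC
  have hw : (a * b * c * d / (q : ℂ)) ^ ((1 : ℂ) / 2) =
      sP q a b c d * (a * b) / (q : ℂ) := by
    rw [eq_div_iff hqC]
    linear_combination -hsw
  have hγ : γ = ((zm : ℂ) * (zp : ℂ)) * (q : ℂ) ^ k * (sP q a b c d * (a * b) / (q : ℂ)) := by
    rw [hγdef, hw]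
    push_cast
    ring
  have hsP' : sP q b a c d = sP q a b c d := by
    unfold sP
    rw [mul_comm b a]
  -- the theta arguments
  have harg_pp : a * sP q a b c d * (zp : ℂ) / ((q : ℂ) * γ) =
      (q : ℂ) ^ (-k) * (b * (zm : ℂ))⁻¹ := by
    rw [hγ, zpow_neg]
    field_simp
  have harg_pm : a * sP q a b c d * (zm : ℂ) / ((q : ℂ) * γ) =
      (q : ℂ) ^ (-k) * (b * (zp : ℂ))⁻¹ := by
    rw [hγ, zpow_neg]
    field_simp
  have harg_dp : b * sP q b a c d * (zp : ℂ) / ((q : ℂ) * γ) =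
      (q : ℂ) ^ (-k) * (a * (zm : ℂ))⁻¹ := by
    rw [hsP', hγ, zpow_neg]
    field_simp
  have harg_dm : b * sP q b a c d * (zm : ℂ) / ((q : ℂ) * γ) =
      (q : ℂ) ^ (-k) * (a * (zp : ℂ))⁻¹ := by
    rw [hsP', hγ, zpow_neg]
    field_simp
  -- the key theta identities
  have hk1 := key_theta hq0 hq1 (b * (zp : ℂ)) (b * (zm : ℂ)) (mul_ne_zero hb0 hzpC)
    (mul_ne_zero hb0 hzmC) hPb_p hPb_m k
  have hk2 := key_theta hq0 hq1 (a * (zp : ℂ)) (a * (zm : ℂ)) (mul_ne_zero ha0 hzpC)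
    (mul_ne_zero ha0 hzmC) hPa_p hPa_m k
  have hrb : b * (zp : ℂ) / (b * (zm : ℂ)) = ((zp / zm : ℝ) : ℂ) := by
    rw [mul_div_mul_left _ _ hb0]
    push_cast
    ring
  have hra : a * (zp : ℂ) / (a * (zm : ℂ)) = ((zp / zm : ℝ) : ℂ) := by
    rw [mul_div_mul_left _ _ ha0]
    push_cast
    ring
  rw [hrb] at hk1
  rw [hra] at hk2
  -- nonvanishing of θ(c z₋), θ(d z₋)
  have hv1 : theta (q : ℂ) (c * (zm : ℂ)) ≠ 0 := theta_ne_zero hq0 hq1 _ hPc_m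
  have hv2 : theta (q : ℂ) (d * (zm : ℂ)) ≠ 0 := theta_ne_zero hq0 hq1 _ hPd_m
  constructor
  · simp only [dz]
    rw [harg_pp, harg_pm]
    exact alg hv1 hv2 hk1
  · simp only [dz]
    rw [harg_dp, harg_dm]
    exact alg hv1 hv2 hk2
end VVBQJ
end
end
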